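/- Let A ∈ ℝ^{n×N}, τ, λ > 0, Y ∈ ℝ^{n×m}, L ≥ 2, and B_out > 0. Then for any orthogonal matrices Φ₁, Φ₂, Ψ₁, Ψ₂ ∈ O(N), ‖σ(Ψ₁ f_{Φ₁}^L(Y)) − σ(Ψ₂ f_{Φ₂}^L(Y))‖_F ≤ M_L·‖Ψ₁ − Ψ₂‖_{2→2} + K_L·‖AΦ₁ − AΦ₂‖_{2→2}, where M_L = τ‖A‖_{2→2}‖Y‖_F · Σ_{k=0}^{L−1} ‖I − τAᵀA‖_{2→2}^k and K_L = τ‖Y‖_F‖I − τAᵀA‖_{2→2}^{L−1} + τ‖Y‖_F Σ_{l=2}^{L} ‖I − τAᵀA‖_{2→2}^{L−l}(1 + 2τ‖A‖²_{2→2} Σ_{k=0}^{l−2} ‖I − τAᵀA‖_{2→2}^k), and σ is applied columnwise. -/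

import Mathlib

open MeasureTheory Matrix
open scoped ENNReal

noncomputable def soft (mu x : ℝ) : ℝ := Real.sign x * max 0 (|x| - mu)

noncomputable def softMat {a b : ℕ} (mu : ℝ) (M : Matrix (Fin a) (Fin b) ℝ) :
    Matrix (Fin a) (Fin b) ℝ := Matrix.of fun i j => soft mu (M i j)

noncomputable def specNorm {a b : ℕ} (A : Matrix (Fin a) (Fin b) ℝ) : ℝ :=
  ‖LinearMap.toContinuousLinearMap (Matrix.toEuclideanLin A)‖

noncomputable def frobNorm {a b : ℕ} (A : Matrix (Fin a) (Fin b) ℝ) : ℝ :=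
  Real.sqrt (∑ i, ∑ j, (A i j) ^ 2)

noncomputable def l2 {N : ℕ} (x : Fin N → ℝ) : ℝ := Real.sqrt (∑ i, x i ^ 2)

noncomputable def sigma {N : ℕ} (B : ℝ) (x : Fin N → ℝ) : Fin N → ℝ :=
  if l2 x ≤ B then x else (B / l2 x) • x

noncomputable def sigmaMat {N m : ℕ} (B : ℝ) (M : Matrix (Fin N) (Fin m) ℝ) :
    Matrix (Fin N) (Fin m) ℝ := Matrix.of fun i j => sigma B (fun k => M k j) i

def IsOrthogonal {N : ℕ} (Φ : Matrix (Fin N) (Fin N) ℝ) : Prop := Φᵀ * Φ = 1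

noncomputable def ista {n N m : ℕ} (A : Matrix (Fin n) (Fin N) ℝ) (τ lam : ℝ)
    (Φ : Matrix (Fin N) (Fin N) ℝ) (Y : Matrix (Fin n) (Fin m) ℝ) :
    ℕ → Matrix (Fin N) (Fin m) ℝ
  | 0 => 0
  | l + 1 => softMat (τ * lam)
      ((1 - τ • (Φᵀ * Aᵀ * A * Φ)) * ista A τ lam Φ Y l + τ • ((A * Φ)ᵀ * Y))

noncomputable def istaVec {n N : ℕ} (A : Matrix (Fin n) (Fin N) ℝ) (τ lam : ℝ)
    (Φ : Matrix (Fin N) (Fin N) ℝ) (y : Fin n → ℝ) : ℕ → Fin N → ℝ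
  | 0 => 0
  | l + 1 => soft (τ * lam) ∘
      ((1 - τ • (Φᵀ * Aᵀ * A * Φ)) *ᵥ istaVec A τ lam Φ y l + τ • ((A * Φ)ᵀ *ᵥ y))

noncomputable def KL {n N m : ℕ} (A : Matrix (Fin n) (Fin N) ℝ) (τ : ℝ)
    (Y : Matrix (Fin n) (Fin m) ℝ) (L : ℕ) : ℝ :=
  τ * frobNorm Y * specNorm (1 - τ • (Aᵀ * A)) ^ (L - 1)
    + τ * frobNorm Y * ∑ l ∈ Finset.Icc 2 L,
        specNorm (1 - τ • (Aᵀ * A)) ^ (L - l) *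
          (1 + 2 * τ * specNorm A ^ 2 *
            ∑ k ∈ Finset.range (l - 1), specNorm (1 - τ • (Aᵀ * A)) ^ k)

noncomputable def ML {n N m : ℕ} (A : Matrix (Fin n) (Fin N) ℝ) (τ : ℝ)
    (Y : Matrix (Fin n) (Fin m) ℝ) (L : ℕ) : ℝ :=
  τ * specNorm A * frobNorm Y * ∑ k ∈ Finset.range L, specNorm (1 - τ • (Aᵀ * A)) ^ k

noncomputable def coveringNumber {α : Type*} (d : α → α → ℝ) (s : Set α) (ε : ℝ) : ℝ≥0∞ :=
  ⨅ (t : Finset α) (_ : ∀ x ∈ s, ∃ y ∈ t, d x y ≤ ε), (t.card : ℝ≥0∞)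

/-!
The clipping `σ` is the metric projection onto the ball of radius `B_out`, and soft thresholding
is an entrywise projection residual; both are nonexpansive, so `σ` costs nothing and every layer
can be treated as affine. Orthogonal `Φ` only conjugate the iteration matrix,
`I - τ ΦᵀAᵀAΦ = Φᵀ (I - τ AᵀA) Φ`, so each layer contracts by `ρ = ‖I - τ AᵀA‖`. Hence the
iterates satisfy `‖X_l‖_F ≤ M_l`, and the errors `e_l = ‖X_l¹ - X_l²‖_F` between the two networks
satisfy `e_{l+1} ≤ ρ e_l + (2τ‖A‖ M_l + τ‖Y‖_F) ‖AΦ₁ - AΦ₂‖`, whose solution is `K_l ‖AΦ₁ - AΦ₂‖`.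
-/

open scoped Matrix.Norms.L2Operator RealInnerProductSpace

lemma l2_eq_norm {N : ℕ} (x : Fin N → ℝ) : l2 x = ‖WithLp.toLp 2 x‖ := by
  simp [l2, EuclideanSpace.norm_eq]

lemma frobNorm_nonneg {a b : ℕ} (M : Matrix (Fin a) (Fin b) ℝ) : 0 ≤ frobNorm M :=
  Real.sqrt_nonneg _

lemma frobNorm_eq_sqrt_sum_l2_col {a b : ℕ} (M : Matrix (Fin a) (Fin b) ℝ) :
    frobNorm M = √(∑ j, l2 (fun i => M i j) ^ 2) := by
  simp only [frobNorm, l2, Real.sq_sqrt (Finset.sum_nonneg fun _ _ => sq_nonneg _)]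
  rw [Finset.sum_comm]

lemma frobNorm_eq_norm {a b : ℕ} (M : Matrix (Fin a) (Fin b) ℝ) :
    frobNorm M = ‖(WithLp.toLp 2 fun p : Fin a × Fin b => M p.1 p.2 : EuclideanSpace ℝ _)‖ := by
  simp [frobNorm, EuclideanSpace.norm_eq, Fintype.sum_prod_type]

lemma frobNorm_add_le {a b : ℕ} (M P : Matrix (Fin a) (Fin b) ℝ) :
    frobNorm (M + P) ≤ frobNorm M + frobNorm P := by
  simp only [frobNorm_eq_norm]
  refine (norm_add_le _ _).trans_eq' ?_
  rw [← WithLp.toLp_add]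
  rfl

lemma frobNorm_smul {a b : ℕ} (c : ℝ) (M : Matrix (Fin a) (Fin b) ℝ) :
    frobNorm (c • M) = |c| * frobNorm M := by
  rw [frobNorm_eq_norm, frobNorm_eq_norm, ← Real.norm_eq_abs, ← norm_smul]
  rfl

lemma frobNorm_le_of_l2_col_le {a b c : ℕ} {P : Matrix (Fin a) (Fin b) ℝ}
    {Q : Matrix (Fin c) (Fin b) ℝ} {C : ℝ} (hC : 0 ≤ C)
    (h : ∀ j, l2 (fun i => P i j) ≤ C * l2 (fun i => Q i j)) :
    frobNorm P ≤ C * frobNorm Q := by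
  rw [frobNorm_eq_sqrt_sum_l2_col, frobNorm_eq_sqrt_sum_l2_col, ← Real.sqrt_sq hC,
    ← Real.sqrt_mul (sq_nonneg _), Finset.mul_sum]
  gcongr with j
  rw [← mul_pow]
  exact pow_le_pow_left₀ (Real.sqrt_nonneg _) (h j) 2

lemma frobNorm_le_of_abs_le {a b : ℕ} {P Q : Matrix (Fin a) (Fin b) ℝ}
    (h : ∀ i j, |P i j| ≤ |Q i j|) : frobNorm P ≤ frobNorm Q :=
  Real.sqrt_le_sqrt <| Finset.sum_le_sum fun i _ =>
    Finset.sum_le_sum fun j _ => sq_le_sq.2 (h i j)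

lemma abs_sub_sub_sub_le_of_monotone {g : ℝ → ℝ} (hg : Monotone g) (hg' : LipschitzWith 1 g)
    (x y : ℝ) : |(x - g x) - (y - g y)| ≤ |x - y| := by
  have hlip : |g x - g y| ≤ |x - y| := by simpa [Real.dist_eq] using hg'.dist_le_mul x y
  rcases le_total y x with h | h
  · have := hg h
    rw [abs_of_nonneg (sub_nonneg.2 h)] at hlip ⊢
    rw [abs_le] at hlip ⊢
    constructor <;> linarith
  · have := hg h
    rw [abs_of_nonpos (sub_nonpos.2 h)] at hlip ⊢
    rw [abs_le] at hlip ⊢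
    constructor <;> linarith

lemma soft_eq_sub_clamp {mu : ℝ} (hmu : 0 ≤ mu) (x : ℝ) :
    soft mu x = x - max (-mu) (min mu x) := by
  unfold soft
  rcases lt_trichotomy x 0 with h | rfl | h
  · rw [Real.sign_of_neg h, abs_of_neg h]
    grind
  · simp [hmu]
  · rw [Real.sign_of_pos h, abs_of_pos h]
    grind

lemma abs_soft_sub_soft_le {mu : ℝ} (hmu : 0 ≤ mu) (x y : ℝ) :
    |soft mu x - soft mu y| ≤ |x - y| := by
  rw [soft_eq_sub_clamp hmu, soft_eq_sub_clamp hmu]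
  exact abs_sub_sub_sub_le_of_monotone (fun _ _ h => max_le_max le_rfl (min_le_min le_rfl h))
    ((LipschitzWith.id.const_min mu).const_max (-mu)) x y

section Retraction

variable {E : Type*} [NormedAddCommGroup E] [InnerProductSpace ℝ E]

lemma norm_sub_le_of_inner_sub_nonpos {P : E → E} (hP : ∀ x y, ⟪x - P x, P y - P x⟫ ≤ 0)
    (x y : E) : ‖P x - P y‖ ≤ ‖x - y‖ := by
  have key : ‖P x - P y‖ ^ 2 ≤ ⟪x - y, P x - P y⟫ := by
    have hx := hP x y
    have hy := hP y x
    rw [← real_inner_self_eq_norm_sq]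
    simp only [inner_sub_left, inner_sub_right, real_inner_comm] at hx hy ⊢
    linarith
  have hcs := real_inner_le_norm (x - y) (P x - P y)
  nlinarith [norm_nonneg (P x - P y), norm_nonneg (x - y)]

noncomputable def radialRetraction (B : ℝ) (x : E) : E := if ‖x‖ ≤ B then x else (B / ‖x‖) • x

lemma norm_radialRetraction_le {B : ℝ} (hB : 0 ≤ B) (x : E) : ‖radialRetraction B x‖ ≤ B := by
  unfold radialRetraction
  split_ifs with h
  · exact h
  · rw [norm_smul, Real.norm_of_nonneg (by positivity), div_mul_cancel₀]
    exact (hB.trans_lt (not_le.1 h)).ne'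

lemma inner_sub_radialRetraction_nonpos {B : ℝ} (hB : 0 ≤ B) (x y : E) :
    ⟪x - radialRetraction B x, radialRetraction B y - radialRetraction B x⟫ ≤ 0 := by
  by_cases h : ‖x‖ ≤ B
  · simp [radialRetraction, h]
  have hx : 0 < ‖x‖ := hB.trans_lt (not_le.1 h)
  have hsub : x - radialRetraction B x = (1 - B / ‖x‖) • x := by
    simp [radialRetraction, h, sub_smul]
  -- Outside the ball, `x - r x` points along `x`, and `⟪x, r y⟫ ≤ ‖x‖ B = ⟪x, r x⟫`.
  have hinner : ⟪x, radialRetraction B y - radialRetraction B x⟫ ≤ 0 := by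
    have hry := (real_inner_le_norm x (radialRetraction B y)).trans
      (mul_le_mul_of_nonneg_left (norm_radialRetraction_le hB y) hx.le)
    simp only [radialRetraction, h, if_false, inner_sub_right, real_inner_smul_right,
      real_inner_self_eq_norm_sq] at hry ⊢
    field_simp
    nlinarith
  rw [hsub, real_inner_smul_left]
  refine mul_nonpos_of_nonneg_of_nonpos ?_ hinner
  rw [sub_nonneg, div_le_one hx]
  exact (not_le.1 h).le

lemma norm_radialRetraction_sub_le {B : ℝ} (hB : 0 ≤ B) (x y : E) :
    ‖radialRetraction B x - radialRetraction B y‖ ≤ ‖x - y‖ :=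
  norm_sub_le_of_inner_sub_nonpos (inner_sub_radialRetraction_nonpos hB) x y

end Retraction

lemma toLp_sigma {N : ℕ} (B : ℝ) (x : Fin N → ℝ) :
    WithLp.toLp 2 (sigma B x) = radialRetraction B (WithLp.toLp 2 x) := by
  unfold sigma radialRetraction
  rw [l2_eq_norm]
  split_ifs <;> rfl

lemma l2_sigma_sub_le {N : ℕ} {B : ℝ} (hB : 0 ≤ B) (x y : Fin N → ℝ) :
    l2 (sigma B x - sigma B y) ≤ l2 (x - y) := by
  simpa only [l2_eq_norm, WithLp.toLp_sub, toLp_sigma] using norm_radialRetraction_sub_le hB _ _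

lemma specNorm_eq_norm {a b : ℕ} (M : Matrix (Fin a) (Fin b) ℝ) : specNorm M = ‖M‖ := rfl

lemma specNorm_nonneg {a b : ℕ} (M : Matrix (Fin a) (Fin b) ℝ) : 0 ≤ specNorm M := norm_nonneg M

lemma specNorm_mul_le {a b c : ℕ} (M : Matrix (Fin a) (Fin b) ℝ) (P : Matrix (Fin b) (Fin c) ℝ) :
    specNorm (M * P) ≤ specNorm M * specNorm P :=
  Matrix.l2_opNorm_mul M P

lemma specNorm_transpose {a b : ℕ} (M : Matrix (Fin a) (Fin b) ℝ) :
    specNorm Mᵀ = specNorm M := by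
  simpa [specNorm_eq_norm] using M.l2_opNorm_conjTranspose

lemma l2_mulVec_le {a b : ℕ} (M : Matrix (Fin a) (Fin b) ℝ) (x : Fin b → ℝ) :
    l2 (M *ᵥ x) ≤ specNorm M * l2 x := by
  rw [l2_eq_norm, l2_eq_norm, specNorm_eq_norm]
  exact M.l2_opNorm_mulVec (WithLp.toLp 2 x)

lemma IsOrthogonal.specNorm_le_one {N : ℕ} {Φ : Matrix (Fin N) (Fin N) ℝ} (hΦ : IsOrthogonal Φ) :
    specNorm Φ ≤ 1 := by
  have h : specNorm Φ * specNorm Φ ≤ 1 := by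
    rw [specNorm_eq_norm, ← Matrix.l2_opNorm_conjTranspose_mul_self,
      Matrix.conjTranspose_eq_transpose_of_trivial, hΦ, ← Matrix.l2_opNorm_toEuclideanCLM, map_one]
    exact ContinuousLinearMap.norm_id_le
  nlinarith [specNorm_nonneg Φ]

lemma specNorm_mul_le_of_isOrthogonal {a N : ℕ} (M : Matrix (Fin a) (Fin N) ℝ)
    {Φ : Matrix (Fin N) (Fin N) ℝ} (hΦ : IsOrthogonal Φ) : specNorm (M * Φ) ≤ specNorm M :=
  (specNorm_mul_le M Φ).trans (mul_le_of_le_one_right (specNorm_nonneg M) hΦ.specNorm_le_one)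

lemma specNorm_transpose_mul_sub_le {a b : ℕ} (B₁ B₂ : Matrix (Fin a) (Fin b) ℝ) :
    specNorm (B₁ᵀ * B₁ - B₂ᵀ * B₂) ≤ (specNorm B₁ + specNorm B₂) * specNorm (B₁ - B₂) := by
  have h : B₁ᵀ * B₁ - B₂ᵀ * B₂ = B₁ᵀ * (B₁ - B₂) + (B₁ - B₂)ᵀ * B₂ := by
    rw [Matrix.mul_sub, Matrix.transpose_sub, Matrix.sub_mul]; abel
  calc specNorm (B₁ᵀ * B₁ - B₂ᵀ * B₂)
      ≤ specNorm (B₁ᵀ * (B₁ - B₂)) + specNorm ((B₁ - B₂)ᵀ * B₂) := by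
        simp only [h, specNorm_eq_norm]; exact norm_add_le _ _
    _ ≤ specNorm B₁ᵀ * specNorm (B₁ - B₂) + specNorm (B₁ - B₂)ᵀ * specNorm B₂ :=
        add_le_add (specNorm_mul_le _ _) (specNorm_mul_le _ _)
    _ = (specNorm B₁ + specNorm B₂) * specNorm (B₁ - B₂) := by
        rw [specNorm_transpose, specNorm_transpose]; ring

lemma frobNorm_mul_le {a b c : ℕ} (M : Matrix (Fin a) (Fin b) ℝ) (X : Matrix (Fin b) (Fin c) ℝ) :
    frobNorm (M * X) ≤ specNorm M * frobNorm X :=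
  frobNorm_le_of_l2_col_le (specNorm_nonneg M) fun j => l2_mulVec_le M fun k => X k j

lemma frobNorm_mul_sub_mul_le {a b c : ℕ} (P₁ P₂ : Matrix (Fin a) (Fin b) ℝ)
    (X₁ X₂ : Matrix (Fin b) (Fin c) ℝ) :
    frobNorm (P₁ * X₁ - P₂ * X₂) ≤
      specNorm (P₁ - P₂) * frobNorm X₁ + specNorm P₂ * frobNorm (X₁ - X₂) := by
  have h : P₁ * X₁ - P₂ * X₂ = (P₁ - P₂) * X₁ + P₂ * (X₁ - X₂) := by
    rw [Matrix.sub_mul, Matrix.mul_sub]; abel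
  rw [h]
  exact (frobNorm_add_le _ _).trans (add_le_add (frobNorm_mul_le _ _) (frobNorm_mul_le _ _))

lemma frobNorm_smul_transpose_mul_le {a b c : ℕ} {τ : ℝ} (hτ : 0 ≤ τ) (B : Matrix (Fin a) (Fin b) ℝ)
    (Y : Matrix (Fin a) (Fin c) ℝ) : frobNorm (τ • (Bᵀ * Y)) ≤ τ * specNorm B * frobNorm Y := by
  rw [frobNorm_smul, abs_of_nonneg hτ, mul_assoc, ← specNorm_transpose]
  exact mul_le_mul_of_nonneg_left (frobNorm_mul_le _ _) hτ

lemma frobNorm_softMat_sub_le {a b : ℕ} {mu : ℝ} (hmu : 0 ≤ mu) (P Q : Matrix (Fin a) (Fin b) ℝ) :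
    frobNorm (softMat mu P - softMat mu Q) ≤ frobNorm (P - Q) :=
  frobNorm_le_of_abs_le fun i j => abs_soft_sub_soft_le hmu (P i j) (Q i j)

lemma frobNorm_softMat_le {a b : ℕ} {mu : ℝ} (hmu : 0 ≤ mu) (P : Matrix (Fin a) (Fin b) ℝ) :
    frobNorm (softMat mu P) ≤ frobNorm P :=
  frobNorm_le_of_abs_le fun i j => by
    have h := abs_soft_sub_soft_le hmu (P i j) 0
    rwa [show soft mu 0 = 0 by simp [soft], sub_zero, sub_zero] at h

lemma frobNorm_sigmaMat_sub_le {N m : ℕ} {B : ℝ} (hB : 0 ≤ B) (M P : Matrix (Fin N) (Fin m) ℝ) :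
    frobNorm (sigmaMat B M - sigmaMat B P) ≤ frobNorm (M - P) := by
  have h := frobNorm_le_of_l2_col_le zero_le_one (P := sigmaMat B M - sigmaMat B P) (Q := M - P)
    fun j => (l2_sigma_sub_le hB (fun k => M k j) (fun k => P k j)).trans_eq (one_mul _).symm
  rwa [one_mul] at h

section Ista

variable {n N m : ℕ} (A : Matrix (Fin n) (Fin N) ℝ) {τ lam : ℝ} (Y : Matrix (Fin n) (Fin m) ℝ)

lemma specNorm_one_sub_smul_gram_le {Φ : Matrix (Fin N) (Fin N) ℝ} (hΦ : IsOrthogonal Φ) :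
    specNorm (1 - τ • (Φᵀ * Aᵀ * A * Φ)) ≤ specNorm (1 - τ • (Aᵀ * A)) := by
  have h : 1 - τ • (Φᵀ * Aᵀ * A * Φ) = Φᵀ * (1 - τ • (Aᵀ * A)) * Φ := by
    rw [Matrix.mul_sub, Matrix.sub_mul, Matrix.mul_one, hΦ, Matrix.mul_smul, Matrix.smul_mul]
    simp only [Matrix.mul_assoc]
  rw [h]
  refine (specNorm_mul_le_of_isOrthogonal _ hΦ).trans ?_
  refine (specNorm_mul_le _ _).trans (mul_le_of_le_one_left (specNorm_nonneg _) ?_)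
  rw [specNorm_transpose]
  exact hΦ.specNorm_le_one

lemma specNorm_one_sub_smul_gram_sub_le (hτ : 0 ≤ τ) {Φ₁ Φ₂ : Matrix (Fin N) (Fin N) ℝ}
    (hΦ₁ : IsOrthogonal Φ₁) (hΦ₂ : IsOrthogonal Φ₂) :
    specNorm ((1 - τ • (Φ₁ᵀ * Aᵀ * A * Φ₁)) - (1 - τ • (Φ₂ᵀ * Aᵀ * A * Φ₂))) ≤
      2 * τ * specNorm A * specNorm (A * Φ₁ - A * Φ₂) := by
  have hgram (Φ : Matrix (Fin N) (Fin N) ℝ) : Φᵀ * Aᵀ * A * Φ = (A * Φ)ᵀ * (A * Φ) := by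
    simp only [Matrix.transpose_mul, Matrix.mul_assoc]
  rw [hgram, hgram, sub_sub_sub_cancel_left, ← smul_sub, specNorm_eq_norm, norm_smul,
    Real.norm_of_nonneg hτ, ← specNorm_eq_norm]
  calc τ * specNorm ((A * Φ₂)ᵀ * (A * Φ₂) - (A * Φ₁)ᵀ * (A * Φ₁))
      ≤ τ * ((specNorm (A * Φ₂) + specNorm (A * Φ₁)) * specNorm (A * Φ₁ - A * Φ₂)) := by
        rw [specNorm_eq_norm (A * Φ₁ - _), ← norm_sub_rev]
        exact mul_le_mul_of_nonneg_left (specNorm_transpose_mul_sub_le _ _) hτ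
    _ ≤ τ * ((specNorm A + specNorm A) * specNorm (A * Φ₁ - A * Φ₂)) := by
        gcongr
        · exact specNorm_nonneg _
        · exact specNorm_mul_le_of_isOrthogonal A hΦ₂
        · exact specNorm_mul_le_of_isOrthogonal A hΦ₁
    _ = 2 * τ * specNorm A * specNorm (A * Φ₁ - A * Φ₂) := by ring

lemma frobNorm_ista_le (hτ : 0 ≤ τ) (hlam : 0 ≤ lam) {Φ : Matrix (Fin N) (Fin N) ℝ}
    (hΦ : IsOrthogonal Φ) (l : ℕ) : frobNorm (ista A τ lam Φ Y l) ≤ ML A τ Y l := by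
  induction l with
  | zero => simp [ista, ML, frobNorm]
  | succ l ih =>
    calc frobNorm (ista A τ lam Φ Y (l + 1))
        ≤ frobNorm ((1 - τ • (Φᵀ * Aᵀ * A * Φ)) * ista A τ lam Φ Y l + τ • ((A * Φ)ᵀ * Y)) :=
          frobNorm_softMat_le (mul_nonneg hτ hlam) _
      _ ≤ specNorm (1 - τ • (Aᵀ * A)) * ML A τ Y l + τ * specNorm A * frobNorm Y := by
          refine (frobNorm_add_le _ _).trans (add_le_add ?_ ?_)
          · exact (frobNorm_mul_le _ _).trans <| mul_le_mul
              (specNorm_one_sub_smul_gram_le A hΦ) ih (frobNorm_nonneg _) (specNorm_nonneg _)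
          · refine (frobNorm_smul_transpose_mul_le hτ _ Y).trans ?_
            gcongr
            · exact frobNorm_nonneg Y
            · exact specNorm_mul_le_of_isOrthogonal A hΦ
      _ = ML A τ Y (l + 1) := by
          rw [ML, ML, geom_sum_succ]; ring

lemma KL_succ {l : ℕ} (hl : 1 ≤ l) :
    KL A τ Y (l + 1) = specNorm (1 - τ • (Aᵀ * A)) * KL A τ Y l
      + τ * frobNorm Y * (1 + 2 * τ * specNorm A ^ 2 *
          ∑ k ∈ Finset.range l, specNorm (1 - τ • (Aᵀ * A)) ^ k) := by
  obtain ⟨k, rfl⟩ : ∃ k, l = k + 1 := ⟨l - 1, by omega⟩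
  unfold KL
  set ρ := specNorm (1 - τ • (Aᵀ * A))
  have hsum : ∑ j ∈ Finset.Icc 2 (k + 1), ρ ^ (k + 1 + 1 - j) *
        (1 + 2 * τ * specNorm A ^ 2 * ∑ i ∈ Finset.range (j - 1), ρ ^ i)
      = ρ * ∑ j ∈ Finset.Icc 2 (k + 1), ρ ^ (k + 1 - j) *
        (1 + 2 * τ * specNorm A ^ 2 * ∑ i ∈ Finset.range (j - 1), ρ ^ i) := by
    rw [Finset.mul_sum]
    refine Finset.sum_congr rfl fun j hj => ?_
    rw [show k + 1 + 1 - j = k + 1 - j + 1 by grind, pow_succ]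
    ring
  rw [Finset.sum_Icc_succ_top (by omega), hsum]
  simp only [Nat.add_sub_cancel, Nat.sub_self, pow_zero, pow_succ]
  ring

lemma frobNorm_ista_succ_sub_le (hτ : 0 ≤ τ) (hlam : 0 ≤ lam) {Φ₁ Φ₂ : Matrix (Fin N) (Fin N) ℝ}
    (hΦ₁ : IsOrthogonal Φ₁) (hΦ₂ : IsOrthogonal Φ₂) (l : ℕ) :
    frobNorm (ista A τ lam Φ₁ Y (l + 1) - ista A τ lam Φ₂ Y (l + 1)) ≤
      specNorm (1 - τ • (Aᵀ * A)) * frobNorm (ista A τ lam Φ₁ Y l - ista A τ lam Φ₂ Y l) +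
        (2 * τ * specNorm A * ML A τ Y l + τ * frobNorm Y) * specNorm (A * Φ₁ - A * Φ₂) := by
  set X₁ := ista A τ lam Φ₁ Y l
  set X₂ := ista A τ lam Φ₂ Y l
  set W₁ := 1 - τ • (Φ₁ᵀ * Aᵀ * A * Φ₁)
  set W₂ := 1 - τ • (Φ₂ᵀ * Aᵀ * A * Φ₂)
  set Δ := specNorm (A * Φ₁ - A * Φ₂)
  have hW : specNorm (W₁ - W₂) * frobNorm X₁ ≤ 2 * τ * specNorm A * Δ * ML A τ Y l :=
    mul_le_mul (specNorm_one_sub_smul_gram_sub_le A hτ hΦ₁ hΦ₂)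
      (frobNorm_ista_le A Y hτ hlam hΦ₁ l) (frobNorm_nonneg _)
      (mul_nonneg (mul_nonneg (by positivity) (specNorm_nonneg A)) (specNorm_nonneg _))
  have hX : specNorm W₂ * frobNorm (X₁ - X₂) ≤
      specNorm (1 - τ • (Aᵀ * A)) * frobNorm (X₁ - X₂) :=
    mul_le_mul_of_nonneg_right (specNorm_one_sub_smul_gram_le A hΦ₂) (frobNorm_nonneg _)
  have hD : frobNorm (τ • ((A * Φ₁)ᵀ * Y) - τ • ((A * Φ₂)ᵀ * Y)) ≤ τ * Δ * frobNorm Y := by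
    rw [← smul_sub, ← Matrix.sub_mul, ← Matrix.transpose_sub]
    exact frobNorm_smul_transpose_mul_le hτ _ Y
  calc frobNorm (ista A τ lam Φ₁ Y (l + 1) - ista A τ lam Φ₂ Y (l + 1))
      ≤ frobNorm ((W₁ * X₁ - W₂ * X₂) + (τ • ((A * Φ₁)ᵀ * Y) - τ • ((A * Φ₂)ᵀ * Y))) := by
        rw [← add_sub_add_comm]
        exact frobNorm_softMat_sub_le (mul_nonneg hτ hlam) _ _
    _ ≤ specNorm (W₁ - W₂) * frobNorm X₁ + specNorm W₂ * frobNorm (X₁ - X₂) +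
          frobNorm (τ • ((A * Φ₁)ᵀ * Y) - τ • ((A * Φ₂)ᵀ * Y)) :=
        (frobNorm_add_le _ _).trans (add_le_add_left (frobNorm_mul_sub_mul_le _ _ _ _) _)
    _ ≤ _ := by linarith

lemma frobNorm_ista_sub_le (hτ : 0 ≤ τ) (hlam : 0 ≤ lam) {Φ₁ Φ₂ : Matrix (Fin N) (Fin N) ℝ}
    (hΦ₁ : IsOrthogonal Φ₁) (hΦ₂ : IsOrthogonal Φ₂) (l : ℕ) :
    frobNorm (ista A τ lam Φ₁ Y l - ista A τ lam Φ₂ Y l) ≤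
      KL A τ Y l * specNorm (A * Φ₁ - A * Φ₂) := by
  rcases Nat.eq_zero_or_pos l with rfl | hl
  · have hKL : KL A τ Y 0 = τ * frobNorm Y := by simp [KL]
    have hzero : frobNorm (ista A τ lam Φ₁ Y 0 - ista A τ lam Φ₂ Y 0) = 0 := by
      simp [ista, frobNorm]
    rw [hKL, hzero]
    exact mul_nonneg (mul_nonneg hτ (frobNorm_nonneg Y)) (specNorm_nonneg _)
  induction l, hl using Nat.le_induction with
  | base => simpa [ista, ML, KL, frobNorm] using frobNorm_ista_succ_sub_le A Y hτ hlam hΦ₁ hΦ₂ 0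
  | succ l hl ih =>
    refine (frobNorm_ista_succ_sub_le A Y hτ hlam hΦ₁ hΦ₂ l).trans ?_
    rw [KL_succ A Y hl, ML]
    nlinarith [specNorm_nonneg (1 - τ • (Aᵀ * A))]

end Ista

theorem statement8_general {n N m : ℕ} (A : Matrix (Fin n) (Fin N) ℝ)
    (τ lam : ℝ) (hτ : 0 < τ) (hlam : 0 < lam)
    (Y : Matrix (Fin n) (Fin m) ℝ) (L : ℕ) (Bout : ℝ) (hBout : 0 < Bout)
    (Φ₁ Φ₂ Ψ₁ Ψ₂ : Matrix (Fin N) (Fin N) ℝ)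
    (hΦ₁ : IsOrthogonal Φ₁) (hΦ₂ : IsOrthogonal Φ₂)
    (hΨ₂ : IsOrthogonal Ψ₂) :
    frobNorm (sigmaMat Bout (Ψ₁ * ista A τ lam Φ₁ Y L) -
              sigmaMat Bout (Ψ₂ * ista A τ lam Φ₂ Y L)) ≤
      ML A τ Y L * specNorm (Ψ₁ - Ψ₂) + KL A τ Y L * specNorm (A * Φ₁ - A * Φ₂) := by
  set X₁ := ista A τ lam Φ₁ Y L
  set X₂ := ista A τ lam Φ₂ Y L
  have hX₁ : frobNorm X₁ ≤ ML A τ Y L := frobNorm_ista_le A Y hτ.le hlam.le hΦ₁ L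
  have hX : frobNorm (X₁ - X₂) ≤ KL A τ Y L * specNorm (A * Φ₁ - A * Φ₂) :=
    frobNorm_ista_sub_le A Y hτ.le hlam.le hΦ₁ hΦ₂ L
  calc frobNorm (sigmaMat Bout (Ψ₁ * X₁) - sigmaMat Bout (Ψ₂ * X₂))
      ≤ frobNorm (Ψ₁ * X₁ - Ψ₂ * X₂) := frobNorm_sigmaMat_sub_le hBout.le _ _
    _ ≤ specNorm (Ψ₁ - Ψ₂) * frobNorm X₁ + specNorm Ψ₂ * frobNorm (X₁ - X₂) :=
        frobNorm_mul_sub_mul_le _ _ _ _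
    _ ≤ specNorm (Ψ₁ - Ψ₂) * ML A τ Y L + 1 * (KL A τ Y L * specNorm (A * Φ₁ - A * Φ₂)) := by
        gcongr
        · exact specNorm_nonneg _
        · exact frobNorm_nonneg _
        · exact hΨ₂.specNorm_le_one
    _ = ML A τ Y L * specNorm (Ψ₁ - Ψ₂) + KL A τ Y L * specNorm (A * Φ₁ - A * Φ₂) := by ring

theorem statement8 {n N m : ℕ} (A : Matrix (Fin n) (Fin N) ℝ)
    (τ lam : ℝ) (hτ : 0 < τ) (hlam : 0 < lam)
    (Y : Matrix (Fin n) (Fin m) ℝ) (L : ℕ) (hL : 2 ≤ L) (Bout : ℝ) (hBout : 0 < Bout)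
    (Φ₁ Φ₂ Ψ₁ Ψ₂ : Matrix (Fin N) (Fin N) ℝ)
    (hΦ₁ : IsOrthogonal Φ₁) (hΦ₂ : IsOrthogonal Φ₂)
    (hΨ₁ : IsOrthogonal Ψ₁) (hΨ₂ : IsOrthogonal Ψ₂) :
    frobNorm (sigmaMat Bout (Ψ₁ * ista A τ lam Φ₁ Y L) -
              sigmaMat Bout (Ψ₂ * ista A τ lam Φ₂ Y L)) ≤
      ML A τ Y L * specNorm (Ψ₁ - Ψ₂) + KL A τ Y L * specNorm (A * Φ₁ - A * Φ₂) :=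
  statement8_general A τ lam hτ hlam Y L Bout hBout Φ₁ Φ₂ Ψ₁ Ψ₂ hΦ₁ hΦ₂ hΨ₂
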